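/- For every real number τ ≥ 1 one has Π(τ, 0) ≤ 2·(2^(τ·ξ) + 1). -/

import Mathlib

open scoped Classical ENNReal
open Real Set Filter

/-- The quadratic function `Q(s) = q·s²`. -/
noncomputable def Qf (q : ℤ) (s : ℝ) : ℝ := (q : ℝ) * s ^ 2

/-- The half-open interval `I_s = [2^(Q(s)), 2^(Q(s)) + Q(s+1) − Q(s) + Ξ)`. -/
noncomputable def Iset (q Ξ : ℤ) (s : ℝ) : Set ℝ :=
  Set.Ico ((2 : ℝ) ^ (Qf q s)) ((2 : ℝ) ^ (Qf q s) + Qf q (s + 1) - Qf q s + (Ξ : ℝ))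

/-- The half-open interval `J_s = [2^(Q(s)) + Q(s+1) − Q(s) + Ξ, 2^(Q(s+1)))`. -/
noncomputable def Jset (q Ξ : ℤ) (s : ℝ) : Set ℝ :=
  Set.Ico ((2 : ℝ) ^ (Qf q s) + Qf q (s + 1) - Qf q s + (Ξ : ℝ)) ((2 : ℝ) ^ (Qf q (s + 1)))

/-- The sequence `(x_j)` in `{0,1}`: `x_j = 0` iff `j + 1 ∈ I_s` for some integer `s ≥ 0`. -/
noncomputable def xseq (q Ξ : ℤ) (j : ℕ) : ℕ :=
  if ∃ s : ℕ, ((j : ℝ) + 1) ∈ Iset q Ξ (s : ℝ) then 0 else 1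

/-- `N(k) = #{ j ∈ {0,…,k−1} : x_j = 0 }`, with `N(0) = 0`. -/
noncomputable def Nf (q Ξ : ℤ) (k : ℕ) : ℕ :=
  ((Finset.range k).filter (fun j => xseq q Ξ j = 0)).card

/-- `B(0) = 0`, `B(1) = 1`, and for `k ≥ 2`,
`B(k) = 1 + #{ j ∈ {0,…,k−2} : x_j ≠ x_{j+1} }`. -/
noncomputable def Bf (q Ξ : ℤ) (k : ℕ) : ℕ :=
  if k = 0 then 0
  else 1 + ((Finset.range (k - 1)).filter (fun j => xseq q Ξ j ≠ xseq q Ξ (j + 1))).card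

/-- The length `|J_s| = 2^(Q(s+1)) − 2^(Q(s)) − (Q(s+1) − Q(s) + Ξ)` of `J_s`. -/
noncomputable def Jlen (q Ξ : ℤ) (s : ℝ) : ℝ :=
  (2 : ℝ) ^ (Qf q (s + 1)) - (2 : ℝ) ^ (Qf q s) - (Qf q (s + 1) - Qf q s + (Ξ : ℝ))

/-- `λ(s) = 1/|J_s|`. -/
noncomputable def lamf (q Ξ : ℤ) (s : ℝ) : ℝ := 1 / Jlen q Ξ s

/-- The two-variable series `Π(τ,λ) = Σ_{k≥0} 2^(−λk − τ·N(k) + τ·ξ·B(k))`, a sum in `[0,∞]`. -/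
noncomputable def Pi2 (q Ξ : ℤ) (ξ τ lam : ℝ) : ℝ≥0∞ :=
  ∑' k : ℕ, ENNReal.ofReal
    ((2 : ℝ) ^ (-lam * (k : ℝ) - τ * (Nf q Ξ k : ℝ) + τ * ξ * (Bf q Ξ k : ℝ)))

/-!
The sequence `x` consists of runs of zeros of length `L s = Q(s+1) - Q(s) + Ξ` starting at
position `2^Q(s)`, separated by nonempty runs of ones (this is where `2^(q-1) ≥ q + 1 + Ξ`
enters). At a step `k` in the `i`-th place of the `s`-th zero run, `B k = 2s + 1` and
`N k = ∑_{t<s} L t + i`; in the following run of ones, `B k = 2s + 2` and `N k = ∑_{t≤s} L t`.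
Since `∑_{t<s} L t = q s² + sΞ` and `Ξ - 2ξ ≥ 1`, the term is at most `2^(τξ) 2^(-s-i)` on the
zero run and `2^(-(s+1) - q(s+1)²)` on the run of ones, which has fewer than `2^(q(s+1)²)`
steps. Summing the geometric series gives `1 + 2·2^(τξ) + 1`.
-/

open Finset

section Counting

variable (x : ℕ → ℕ)

def zeroCount (k : ℕ) : ℕ := ((range k).filter (fun j => x j = 0)).card

def runCount (k : ℕ) : ℕ :=
  if k = 0 then 0 else 1 + ((range (k - 1)).filter (fun j => x j ≠ x (j + 1))).card

variable {x}

lemma zeroCount_succ (k : ℕ) :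
    zeroCount x (k + 1) = zeroCount x k + if x k = 0 then 1 else 0 := by
  simp only [zeroCount, range_add_one, filter_insert]
  split_ifs with h
  · exact card_insert_of_notMem (by simp)
  · rfl

lemma runCount_succ (k : ℕ) :
    runCount x (k + 1) = runCount x k + if k = 0 ∨ x (k - 1) ≠ x k then 1 else 0 := by
  rcases k with _ | k
  · simp [runCount]
  · simp only [runCount, add_tsub_cancel_right, range_add_one, filter_insert]
    split_ifs with h₁ h₂ <;> simp_all [card_insert_of_notMem]
    omega

lemma zeroCount_add_of_forall_eq_zero {m k : ℕ} (hmk : m ≤ k)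
    (h : ∀ j, m ≤ j → j < k → x j = 0) : zeroCount x k = zeroCount x m + (k - m) := by
  induction k, hmk using Nat.le_induction with
  | base => simp
  | succ k hmk ih =>
    rw [zeroCount_succ, ih fun j hm hj => h j hm (by omega), if_pos (h k hmk (by omega))]
    omega

lemma zeroCount_eq_of_forall_ne_zero {m k : ℕ} (hmk : m ≤ k)
    (h : ∀ j, m ≤ j → j < k → x j ≠ 0) : zeroCount x k = zeroCount x m := by
  induction k, hmk using Nat.le_induction with
  | base => rfl
  | succ k hmk ih =>
    rw [zeroCount_succ, ih fun j hm hj => h j hm (by omega), if_neg (h k hmk (by omega)), add_zero]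

lemma runCount_eq_of_forall_eq {m k : ℕ} (hmk : m < k)
    (h : ∀ j, m ≤ j → j < k → x j = x m) : runCount x k = runCount x (m + 1) := by
  induction k, hmk using Nat.le_induction with
  | base => rfl
  | succ k hmk ih =>
    have hconst : x (k - 1) = x k := by rw [h _ (by omega) (by omega), h k (by omega) (by omega)]
    rw [runCount_succ, ih fun j hm hj => h j hm (by omega), if_neg (by omega), add_zero]

end Counting

structure ZeroRuns (x a L : ℕ → ℕ) : Prop where
  start_zero : a 0 = 0
  len_pos : ∀ s, 0 < L s
  add_len_lt : ∀ s, a s + L s < a (s + 1)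
  eq_ite : ∀ j, x j = if ∃ s, a s ≤ j ∧ j < a s + L s then 0 else 1

namespace ZeroRuns

variable {x a L : ℕ → ℕ} (h : ZeroRuns x a L)
include h

lemma strictMono : StrictMono a :=
  strictMono_nat_of_lt_succ fun s => (Nat.le_add_right _ _).trans_lt (h.add_len_lt s)

lemma eq_zero {s j : ℕ} (h₁ : a s ≤ j) (h₂ : j < a s + L s) : x j = 0 := by
  rw [h.eq_ite, if_pos ⟨s, h₁, h₂⟩]

lemma eq_one {s j : ℕ} (h₁ : a s + L s ≤ j) (h₂ : j < a (s + 1)) : x j = 1 := by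
  rw [h.eq_ite, if_neg]
  rintro ⟨t, ht₁, ht₂⟩
  rcases lt_trichotomy t s with hts | rfl | hst
  · have := h.add_len_lt t
    have := h.strictMono.monotone (show t + 1 ≤ s from hts)
    omega
  · omega
  · have := h.strictMono.monotone (show s + 1 ≤ t from hst)
    omega

lemma counts_zeroRun {s k : ℕ} (h₁ : a s < k) (h₂ : k ≤ a s + L s) :
    zeroCount x k = zeroCount x (a s) + (k - a s) ∧ runCount x k = runCount x (a s) + 1 := by
  have hzero : ∀ j, a s ≤ j → j < k → x j = 0 := fun j hj₁ hj₂ => h.eq_zero hj₁ (by omega)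
  refine ⟨zeroCount_add_of_forall_eq_zero h₁.le hzero, ?_⟩
  rw [runCount_eq_of_forall_eq h₁ fun j hj₁ hj₂ => by rw [hzero j hj₁ hj₂, hzero _ le_rfl h₁],
    runCount_succ, if_pos]
  rcases s with _ | t
  · exact Or.inl h.start_zero
  · have := h.add_len_lt t
    rw [h.eq_one (s := t) (by omega) (by omega), hzero _ le_rfl h₁]
    exact Or.inr one_ne_zero

lemma counts_oneRun {s k : ℕ} (h₁ : a s + L s < k) (h₂ : k ≤ a (s + 1)) :
    zeroCount x k = zeroCount x (a s) + L s ∧ runCount x k = runCount x (a s) + 2 := by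
  have hL := h.len_pos s
  have hone : ∀ j, a s + L s ≤ j → j < k → x j = 1 := fun j hj₁ hj₂ => h.eq_one hj₁ (by omega)
  obtain ⟨hN, hB⟩ := h.counts_zeroRun (k := a s + L s) (by omega) le_rfl
  constructor
  · rw [zeroCount_eq_of_forall_ne_zero h₁.le fun j hj₁ hj₂ => by simp [hone j hj₁ hj₂], hN]
    omega
  · rw [runCount_eq_of_forall_eq h₁ fun j hj₁ hj₂ => by rw [hone j hj₁ hj₂, hone _ le_rfl h₁],
      runCount_succ, hB, if_pos]
    rw [h.eq_zero (s := s) (j := a s + L s - 1) (by omega) (by omega), hone _ le_rfl h₁]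
    exact Or.inr zero_ne_one

lemma counts_start (s : ℕ) :
    zeroCount x (a s) = ∑ t ∈ range s, L t ∧ runCount x (a s) = 2 * s := by
  induction s with
  | zero => simp [h.start_zero, zeroCount, runCount]
  | succ s ih =>
    obtain ⟨hN, hB⟩ := h.counts_oneRun (h.add_len_lt s) le_rfl
    rw [hN, hB, ih.1, ih.2, sum_range_succ]
    omega

end ZeroRuns

/- With `q = n` and `q + Ξ = e`: since `x j = 0` iff `j + 1 ∈ I_s`, the `s`-th run of zeros
occupies the indices `[2^Q(s) - 1, 2^Q(s) - 1 + Q(s+1) - Q(s) + Ξ)`. -/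
def blockStart (n s : ℕ) : ℕ := 2 ^ (n * s ^ 2) - 1

def blockLen (n e s : ℕ) : ℕ := 2 * n * s + e

lemma two_rpow_Qf (n s : ℕ) : (2 : ℝ) ^ Qf n s = ((2 ^ (n * s ^ 2) : ℕ) : ℝ) := by
  rw [Nat.cast_pow, ← Real.rpow_natCast, Qf]
  push_cast
  rfl

lemma mem_Iset_iff (n e s j : ℕ) :
    (j : ℝ) + 1 ∈ Iset n (e - n) s ↔ blockStart n s ≤ j ∧ j < blockStart n s + blockLen n e s := by
  have hupper : (2 : ℝ) ^ Qf n s + Qf n (s + 1) - Qf n s + ((e - n : ℤ) : ℝ) =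
      ((2 ^ (n * s ^ 2) + blockLen n e s : ℕ) : ℝ) := by
    rw [two_rpow_Qf]
    push_cast [Qf, blockLen]
    ring
  have hpos : 1 ≤ 2 ^ (n * s ^ 2) := Nat.one_le_two_pow
  rw [Iset, hupper, two_rpow_Qf, Set.mem_Ico, blockStart]
  norm_cast
  omega

lemma blockStart_add_blockLen_lt {n e : ℕ} (hn : 1 ≤ n) (he : e + 1 ≤ 2 ^ (n - 1)) (s : ℕ) :
    blockStart n s + blockLen n e s < blockStart n (s + 1) := by
  set P := 2 ^ (n * s ^ 2)
  set M := 2 ^ (n * (2 * s + 1))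
  have hP : 1 ≤ P := Nat.one_le_two_pow
  have hM : 2 * n * s + e + 2 ≤ M :=
    calc 2 * n * s + e + 2 ≤ (e + 1) * (2 * n * s + 2) := by nlinarith [Nat.zero_le (e * n * s)]
      _ ≤ 2 ^ (n - 1) * 2 ^ (2 * n * s + 1) := Nat.mul_le_mul he Nat.lt_two_pow_self
      _ = M := by
        rw [← pow_add]
        congr 1
        obtain ⟨m, rfl⟩ : ∃ m, n = m + 1 := ⟨n - 1, by omega⟩
        simp only [add_tsub_cancel_right]
        ring
  have hPM : 2 ^ (n * (s + 1) ^ 2) = P * M := by rw [← pow_add]; ring_nf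
  have : P + (2 * n * s + e) < P * M := by
    nlinarith [Nat.mul_le_mul_left P hM, Nat.mul_le_mul_right (2 * n * s + e) hP]
  simp only [blockStart, blockLen, hPM]
  omega

lemma zeroRuns_xseq {n e : ℕ} (hn : 1 ≤ n) (he₁ : 1 ≤ e) (he : e + 1 ≤ 2 ^ (n - 1)) :
    ZeroRuns (xseq n (e - n)) (blockStart n) (blockLen n e) where
  start_zero := by simp [blockStart]
  len_pos s := by simp only [blockLen]; omega
  add_len_lt := blockStart_add_blockLen_lt hn he
  eq_ite j := by simp only [xseq, mem_Iset_iff]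

lemma cast_sum_blockLen (n e s : ℕ) :
    ((∑ t ∈ range s, blockLen n e t : ℕ) : ℝ) = n * s ^ 2 + s * ((e : ℝ) - n) := by
  induction s with
  | zero => simp
  | succ s ih =>
    rw [sum_range_succ, Nat.cast_add, ih]
    push_cast [blockLen]
    ring

lemma sum_Ioc_inv_two_pow_sub_add {m n : ℕ} (hmn : m ≤ n) :
    ∑ k ∈ Ioc m n, (2⁻¹ : ℝ≥0∞) ^ (k - m) + 2⁻¹ ^ (n - m) = 1 := by
  induction n, hmn using Nat.le_induction with
  | base => simp
  | succ n hmn ih =>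
    rw [sum_Ioc_succ_top hmn, Nat.sub_add_comm hmn, add_assoc, pow_succ, ← mul_add,
      ENNReal.inv_two_add_inv_two, mul_one, ih]

lemma ofReal_two_rpow_le {y c : ℝ} {d : ℕ} (h : y ≤ c - d) :
    ENNReal.ofReal (2 ^ y) ≤ ENNReal.ofReal (2 ^ c) * 2⁻¹ ^ d := by
  calc ENNReal.ofReal (2 ^ y) ≤ ENNReal.ofReal (2 ^ (c - d)) :=
        ENNReal.ofReal_le_ofReal (Real.rpow_le_rpow_of_exponent_le one_le_two h)
    _ = ENNReal.ofReal (2 ^ c) * 2⁻¹ ^ d := by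
        rw [Real.rpow_sub two_pos, Real.rpow_natCast, div_eq_mul_inv,
          ENNReal.ofReal_mul (by positivity), ← inv_pow, ENNReal.ofReal_pow (by norm_num),
          ENNReal.ofReal_inv_of_pos two_pos, ENNReal.ofReal_ofNat]

noncomputable def PiTerm (q Ξ : ℤ) (ξ τ lam : ℝ) (k : ℕ) : ℝ≥0∞ :=
  ENNReal.ofReal ((2 : ℝ) ^ (-lam * (k : ℝ) - τ * (Nf q Ξ k : ℝ) + τ * ξ * (Bf q Ξ k : ℝ)))

lemma Pi2_eq_tsum (q Ξ : ℤ) (ξ τ lam : ℝ) : Pi2 q Ξ ξ τ lam = ∑' k, PiTerm q Ξ ξ τ lam k := rfl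

lemma le_blockStart {n : ℕ} (hn : 1 ≤ n) (K : ℕ) : K ≤ blockStart n K := by
  have hK : K ≤ n * K ^ 2 :=
    (Nat.le_self_pow two_ne_zero K).trans (Nat.le_mul_of_pos_left _ hn)
  have := (Nat.lt_two_pow_self (n := K)).trans_le (Nat.pow_le_pow_right two_pos hK)
  rw [blockStart]
  omega

section Estimates

variable {n e : ℕ} (hn : 1 ≤ n) (he₁ : 1 ≤ e) (he : e + 1 ≤ 2 ^ (n - 1))
  {ξ τ : ℝ} (hξ : 1 ≤ (e : ℝ) - n - 2 * ξ) (hτ : 1 ≤ τ)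

include hξ in
lemma le_cast_sum_blockLen (s : ℕ) :
    2 * s * ξ + s + n * s ^ 2 ≤ ((∑ t ∈ range s, blockLen n e t : ℕ) : ℝ) := by
  rw [cast_sum_blockLen]
  nlinarith [(Nat.cast_nonneg s : (0 : ℝ) ≤ s)]

include hn he₁ he hξ hτ

lemma PiTerm_le_of_zeroRun {s k : ℕ} (h₁ : blockStart n s < k)
    (h₂ : k ≤ blockStart n s + blockLen n e s) :
    PiTerm n (e - n) ξ τ 0 k ≤
      ENNReal.ofReal (2 ^ (τ * ξ)) * 2⁻¹ ^ (s + (k - blockStart n s)) := by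
  have hruns := zeroRuns_xseq hn he₁ he
  obtain ⟨hN, hB⟩ := hruns.counts_zeroRun h₁ h₂
  obtain ⟨hN₀, hB₀⟩ := hruns.counts_start s
  apply ofReal_two_rpow_le
  change _ - τ * (zeroCount _ k : ℝ) + τ * ξ * (runCount _ k : ℝ) ≤ _
  rw [hN, hB, hN₀, hB₀]
  simp only [Nat.cast_add, Nat.cast_mul, Nat.cast_ofNat, Nat.cast_one, neg_zero, zero_mul, zero_sub]
  have hS := le_cast_sum_blockLen hξ s
  set S : ℝ := ((∑ t ∈ range s, blockLen n e t : ℕ) : ℝ)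
  set i : ℝ := ((k - blockStart n s : ℕ) : ℝ)
  have hi : 0 ≤ i := Nat.cast_nonneg _
  have hD : (s : ℝ) + i ≤ S + i - 2 * s * ξ := by
    have : (0 : ℝ) ≤ n * s ^ 2 := by positivity
    linarith
  nlinarith [mul_le_mul_of_nonneg_right hτ ((add_nonneg (Nat.cast_nonneg s) hi).trans hD)]

lemma PiTerm_le_of_oneRun {s k : ℕ} (h₁ : blockStart n s + blockLen n e s < k)
    (h₂ : k ≤ blockStart n (s + 1)) :
    PiTerm n (e - n) ξ τ 0 k ≤ 2⁻¹ ^ ((s + 1) + n * (s + 1) ^ 2) := by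
  have hruns := zeroRuns_xseq hn he₁ he
  obtain ⟨hN, hB⟩ := hruns.counts_oneRun h₁ h₂
  obtain ⟨hN₀, hB₀⟩ := hruns.counts_start s
  refine (ofReal_two_rpow_le (c := 0) (d := (s + 1) + n * (s + 1) ^ 2) ?_).trans_eq (by simp)
  change _ - τ * (zeroCount _ k : ℝ) + τ * ξ * (runCount _ k : ℝ) ≤ _
  rw [hN, hB, hN₀, hB₀, ← sum_range_succ]
  simp only [Nat.cast_add, Nat.cast_mul, Nat.cast_ofNat, Nat.cast_one, Nat.cast_pow, neg_zero,
    zero_mul, zero_sub]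
  have hS := le_cast_sum_blockLen hξ (s + 1)
  set S : ℝ := ((∑ t ∈ range (s + 1), blockLen n e t : ℕ) : ℝ)
  push_cast at hS
  have hD : (0 : ℝ) ≤ (s + 1) + n * (s + 1) ^ 2 := by positivity
  nlinarith [mul_le_mul_of_nonneg_right hτ (hD.trans (by linarith : _ ≤ S - 2 * (s + 1) * ξ))]

lemma sum_zeroRun_le (s : ℕ) :
    ∑ k ∈ Ioc (blockStart n s) (blockStart n s + blockLen n e s), PiTerm n (e - n) ξ τ 0 k ≤
      ENNReal.ofReal (2 ^ (τ * ξ)) * 2⁻¹ ^ s := by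
  set X := ENNReal.ofReal (2 ^ (τ * ξ))
  calc ∑ k ∈ Ioc (blockStart n s) (blockStart n s + blockLen n e s), PiTerm n (e - n) ξ τ 0 k
      ≤ ∑ k ∈ Ioc (blockStart n s) (blockStart n s + blockLen n e s),
          X * 2⁻¹ ^ s * 2⁻¹ ^ (k - blockStart n s) := by
        refine sum_le_sum fun k hk => ?_
        rw [Finset.mem_Ioc] at hk
        rw [mul_assoc, ← pow_add]
        exact PiTerm_le_of_zeroRun hn he₁ he hξ hτ hk.1 hk.2
    _ ≤ X * 2⁻¹ ^ s * 1 := by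
        rw [← mul_sum]
        gcongr
        exact le_self_add.trans_eq (sum_Ioc_inv_two_pow_sub_add (Nat.le_add_right _ _))
    _ = X * 2⁻¹ ^ s := mul_one _

lemma sum_oneRun_le (s : ℕ) :
    ∑ k ∈ Ioc (blockStart n s + blockLen n e s) (blockStart n (s + 1)), PiTerm n (e - n) ξ τ 0 k ≤
      2⁻¹ ^ (s + 1) := by
  set E := n * (s + 1) ^ 2
  have hcard : #(Ioc (blockStart n s + blockLen n e s) (blockStart n (s + 1))) ≤ 2 ^ E := by
    rw [Nat.card_Ioc]
    exact (Nat.sub_le _ _).trans (Nat.sub_le _ _)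
  calc ∑ k ∈ Ioc (blockStart n s + blockLen n e s) (blockStart n (s + 1)), PiTerm n (e - n) ξ τ 0 k
      ≤ #(Ioc (blockStart n s + blockLen n e s) (blockStart n (s + 1))) •
          (2⁻¹ : ℝ≥0∞) ^ ((s + 1) + E) := by
        refine sum_le_card_nsmul _ _ _ fun k hk => ?_
        rw [Finset.mem_Ioc] at hk
        exact PiTerm_le_of_oneRun hn he₁ he hξ hτ hk.1 hk.2
    _ ≤ (2 : ℝ≥0∞) ^ E * (2⁻¹ ^ (s + 1) * 2⁻¹ ^ E) := by
        rw [nsmul_eq_mul, pow_add]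
        gcongr
        exact_mod_cast hcard
    _ = 2⁻¹ ^ (s + 1) := by
        rw [mul_left_comm, ← mul_pow, ENNReal.mul_inv_cancel two_ne_zero ENNReal.ofNat_ne_top,
          one_pow, mul_one]

lemma sum_Ioc_zero_blockStart_le (K : ℕ) :
    ∑ k ∈ Ioc 0 (blockStart n K), PiTerm n (e - n) ξ τ 0 k ≤
      ∑ s ∈ range K, (ENNReal.ofReal (2 ^ (τ * ξ)) * 2⁻¹ ^ s + 2⁻¹ ^ (s + 1)) := by
  induction K with
  | zero => simp [blockStart]
  | succ K ih =>
    have hgap := blockStart_add_blockLen_lt hn he K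
    rw [← sum_Ioc_consecutive _ (Nat.zero_le _) (by omega : blockStart n K ≤ blockStart n (K + 1)),
      ← sum_Ioc_consecutive _ (Nat.le_add_right _ _) hgap.le, sum_range_succ]
    exact add_le_add ih
      (add_le_add (sum_zeroRun_le hn he₁ he hξ hτ K) (sum_oneRun_le hn he₁ he hξ hτ K))

lemma Pi2_natCast_le : Pi2 n (e - n) ξ τ 0 ≤ 2 * (ENNReal.ofReal (2 ^ (τ * ξ)) + 1) := by
  set X := ENNReal.ofReal (2 ^ (τ * ξ))
  rw [Pi2_eq_tsum]
  refine ENNReal.tsum_le_of_sum_range_le fun K => ?_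
  have hsub : range K ⊆ insert 0 (Ioc 0 (blockStart n K)) := by
    intro k hk
    have := le_blockStart hn K
    simp only [Finset.mem_range, Finset.mem_insert, Finset.mem_Ioc] at hk ⊢
    omega
  have hzero : PiTerm n (e - n) ξ τ 0 0 = 1 := by simp [PiTerm, Nf, Bf]
  calc ∑ k ∈ range K, PiTerm n (e - n) ξ τ 0 k
      ≤ ∑ k ∈ insert 0 (Ioc 0 (blockStart n K)), PiTerm n (e - n) ξ τ 0 k :=
        sum_le_sum_of_subset hsub
    _ = 1 + ∑ k ∈ Ioc 0 (blockStart n K), PiTerm n (e - n) ξ τ 0 k := by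
        rw [sum_insert (by simp), hzero]
    _ ≤ 1 + (X * ∑ s ∈ range K, 2⁻¹ ^ s + ∑ s ∈ range K, 2⁻¹ ^ (s + 1)) := by
        rw [mul_sum, ← sum_add_distrib]
        gcongr
        exact sum_Ioc_zero_blockStart_le hn he₁ he hξ hτ K
    _ ≤ 1 + (X * 2 + 1) := by
        gcongr
        · exact (ENNReal.sum_le_tsum _).trans_eq ENNReal.tsum_geometric_two
        · refine (ENNReal.sum_le_tsum _).trans_eq ?_
          rw [ENNReal.tsum_geometric_add_one, ENNReal.one_sub_inv_two, inv_inv,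
            ENNReal.inv_mul_cancel two_ne_zero ENNReal.ofNat_ne_top]
    _ = 2 * (X + 1) := by ring

end Estimates

theorem stmt4_general (Ξ q : ℤ) (hq : 3 ≤ q) (hqΞ : 1 ≤ q + Ξ)
    (hpow : (q : ℝ) + 1 + (Ξ : ℝ) ≤ (2 : ℝ) ^ ((q : ℝ) - 1))
    (ξ : ℝ) (hξ1 : 1 ≤ (Ξ : ℝ) - 2 * ξ) :
    ∀ τ : ℝ, 1 ≤ τ →
      Pi2 q Ξ ξ τ 0 ≤ ENNReal.ofReal (2 * ((2 : ℝ) ^ (τ * ξ) + 1)) := by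
  intro τ hτ
  obtain ⟨n, rfl⟩ := Int.eq_ofNat_of_zero_le (by omega : 0 ≤ q)
  obtain ⟨e, he⟩ := Int.eq_ofNat_of_zero_le (by omega : 0 ≤ (n : ℤ) + Ξ)
  obtain rfl : Ξ = e - n := by omega
  have hn : 1 ≤ n := by omega
  have hpow' : e + 1 ≤ 2 ^ (n - 1) := by
    push_cast at hpow
    rw [show (n : ℝ) - 1 = ((n - 1 : ℕ) : ℝ) by push_cast [Nat.cast_sub hn]; rfl,
      Real.rpow_natCast] at hpow
    exact_mod_cast (by push_cast; linarith : ((e + 1 : ℕ) : ℝ) ≤ ((2 ^ (n - 1) : ℕ) : ℝ))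
  push_cast at hξ1
  calc Pi2 n (e - n) ξ τ 0 ≤ 2 * (ENNReal.ofReal (2 ^ (τ * ξ)) + 1) :=
        Pi2_natCast_le hn (by omega) hpow' (by linarith) hτ
    _ = ENNReal.ofReal (2 * ((2 : ℝ) ^ (τ * ξ) + 1)) := by
        rw [ENNReal.ofReal_mul zero_le_two, ENNReal.ofReal_add (by positivity) zero_le_one,
          ENNReal.ofReal_one, ENNReal.ofReal_ofNat]

theorem stmt4 (Ξ q : ℤ) (hq : 3 ≤ q) (hqΞ : 1 ≤ q + Ξ)
    (hpow : (q : ℝ) + 1 + (Ξ : ℝ) ≤ (2 : ℝ) ^ ((q : ℝ) - 1))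
    (ξ : ℝ) (hξ1 : 1 ≤ (Ξ : ℝ) - 2 * ξ) (hξ2 : (Ξ : ℝ) - 2 * ξ ≤ 2) :
    ∀ τ : ℝ, 1 ≤ τ →
      Pi2 q Ξ ξ τ 0 ≤ ENNReal.ofReal (2 * ((2 : ℝ) ^ (τ * ξ) + 1)) :=
  stmt4_general Ξ q hq hqΞ hpow ξ hξ1
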